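/- Fix c ∈ K and consider the new 2-component equation (ceqnew): 𝔽¹ = u¹₀·u²₀/u²₁, 𝔽² = u²₀·(c·u¹₋₁ − u¹₀)/u¹₋₁. Then the matrices M = [[λ − (c·u¹₀·u²₁ − u¹₀·u²₀ − u¹₁·u²₁)/(u¹₀·u²₁), −u¹₀/u²₁],[u²₁/u¹₀, 0]] and U = [[0, u¹₀/u²₁],[−u²₀/u¹₋₁, λ]] form an MLR for this equation: D_t(M) = S(U)·M − M·U. -/

import Mathlib

/-!
The hypotheses on `Dt` say exactly that it is a `K`-derivation of the rational function field,
so `D_t(M)` only depends on its values on the four variables `u¹₀, u¹₁, u²₀, u²₁` occurring in `M`,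
namely `𝔽¹, S𝔽¹, 𝔽², S𝔽²`. With these values the Lax equation is an identity of rational functions,
checked entry by entry; and `det M = 1` because `M₁₁ = 0` and `M₀₁ M₁₀ = -1`.
-/

open MvPolynomial

/-- Variables: `none` is `λ`; `some (j, ℓ)` is `u^j_ℓ`. -/
abbrev VarC := Option (Fin 2 × ℤ)

/-- Polynomial ring over `K` in `λ`, `u¹_ℓ`, `u²_ℓ`. -/
abbrev PolyC (K : Type) [Field K] := MvPolynomial VarC K

/-- Field of rational functions over `K` in `λ`, `u¹_ℓ`, `u²_ℓ`. -/
abbrev FC (K : Type) [Field K] := FractionRing (PolyC K)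

/-- The spectral parameter `λ`. -/
noncomputable def lam (K : Type) [Field K] : FC K :=
  algebraMap (PolyC K) (FC K) (X none)

/-- The variable `u¹_ℓ`. -/
noncomputable def U1 (K : Type) [Field K] (ℓ : ℤ) : FC K :=
  algebraMap (PolyC K) (FC K) (X (some (0, ℓ)))

/-- The variable `u²_ℓ`. -/
noncomputable def U2 (K : Type) [Field K] (ℓ : ℤ) : FC K :=
  algebraMap (PolyC K) (FC K) (X (some (1, ℓ)))

/-- `𝔽¹ = u¹₀·u²₀/u²₁` of equation (ceqnew). -/
noncomputable def Feq1 (K : Type) [Field K] : FC K := U1 K 0 * U2 K 0 / U2 K 1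

/-- `𝔽² = u²₀·(c·u¹₋₁ − u¹₀)/u¹₋₁` of equation (ceqnew). -/
noncomputable def Feq2 (K : Type) [Field K] (c : K) : FC K :=
  U2 K 0 * (algebraMap K (FC K) c * U1 K (-1) - U1 K 0) / U1 K (-1)

/-- The matrix `M` of the MLR for equation (ceqnew). -/
noncomputable def Mceq (K : Type) [Field K] (c : K) : Matrix (Fin 2) (Fin 2) (FC K) :=
  !![lam K - (algebraMap K (FC K) c * U1 K 0 * U2 K 1 - U1 K 0 * U2 K 0 -
        U1 K 1 * U2 K 1) / (U1 K 0 * U2 K 1),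
      -(U1 K 0 / U2 K 1);
    U2 K 1 / U1 K 0, 0]

/-- The matrix `U` of the MLR for equation (ceqnew). -/
noncomputable def Uceq (K : Type) [Field K] : Matrix (Fin 2) (Fin 2) (FC K) :=
  !![0, U1 K 0 / U2 K 1; -(U2 K 0 / U1 K (-1)), lam K]

def Derivation.ofLeibniz {R A : Type*} [CommSemiring R] [CommRing A] [Algebra R A] (D : A → A)
    (hadd : ∀ x y, D (x + y) = D x + D y) (hmul : ∀ x y, D (x * y) = x * D y + D x * y)
    (halg : ∀ r, D (algebraMap R A r) = 0) : Derivation R A A :=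
  Derivation.mk'
    { toFun := D
      map_add' := hadd
      map_smul' := fun r x => by
        simp only [Algebra.smul_def, hmul, halg, zero_mul, add_zero, RingHom.id_apply] }
    fun a b => by simp only [LinearMap.coe_mk, AddHom.coe_mk, smul_eq_mul, hmul, mul_comm (D a)]

@[simp]
theorem Derivation.coe_ofLeibniz {R A : Type*} [CommSemiring R] [CommRing A] [Algebra R A]
    (D : A → A) (hadd hmul halg) : ⇑(Derivation.ofLeibniz (R := R) D hadd hmul halg) = D :=
  rfl

section

variable {K : Type} [Field K]

theorem U1_ne_zero (ℓ : ℤ) : U1 K ℓ ≠ 0 :=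
  (map_ne_zero_iff _ (IsFractionRing.injective _ _)).mpr (X_ne_zero _)

theorem U2_ne_zero (ℓ : ℤ) : U2 K ℓ ≠ 0 :=
  (map_ne_zero_iff _ (IsFractionRing.injective _ _)).mpr (X_ne_zero _)

theorem Mceq_det (c : K) : (Mceq K c).det = 1 := by
  rw [Mceq, Matrix.det_fin_two_of]
  field_simp [U1_ne_zero, U2_ne_zero]
  ring

theorem Uceq_map_shift (S : FC K ≃+* FC K) (hSlam : S (lam K) = lam K)
    (hSu1 : ∀ ℓ : ℤ, S (U1 K ℓ) = U1 K (ℓ + 1)) (hSu2 : ∀ ℓ : ℤ, S (U2 K ℓ) = U2 K (ℓ + 1)) :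
    (Uceq K).map S = !![0, U1 K 1 / U2 K 2; -(U2 K 1 / U1 K 0), lam K] := by
  ext i j
  fin_cases i <;> fin_cases j <;> simp [Uceq, hSlam, hSu1, hSu2]

theorem Mceq_map_derivation (c : K) (D : Derivation K (FC K) (FC K))
    (hDlam : D (lam K) = 0)
    (hDu10 : D (U1 K 0) = U1 K 0 * U2 K 0 / U2 K 1)
    (hDu11 : D (U1 K 1) = U1 K 1 * U2 K 1 / U2 K 2)
    (hDu20 : D (U2 K 0) = U2 K 0 * (algebraMap K (FC K) c * U1 K (-1) - U1 K 0) / U1 K (-1))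
    (hDu21 : D (U2 K 1) = U2 K 1 * (algebraMap K (FC K) c * U1 K 0 - U1 K 1) / U1 K 0) :
    (Mceq K c).map D =
      !![0, U1 K 1 / U2 K 2; -(U2 K 1 / U1 K 0), lam K] * Mceq K c - Mceq K c * Uceq K := by
  ext i j
  fin_cases i <;> fin_cases j <;>
    simp only [Mceq, Uceq, Matrix.map_apply, Matrix.sub_apply, Matrix.mul_apply, Fin.sum_univ_two,
      Matrix.of_apply, Matrix.cons_val', Matrix.cons_val_zero, Matrix.cons_val_one,
      Matrix.cons_val_fin_one, Fin.isValue, Fin.zero_eta, Fin.mk_one] <;>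
    simp only [map_sub, map_neg, map_zero, Derivation.leibniz_div, Derivation.leibniz, smul_eq_mul,
      D.map_algebraMap, hDlam, hDu10, hDu11, hDu20, hDu21] <;>
    field_simp [U1_ne_zero, U2_ne_zero] <;> ring

end

theorem stmt_18_general (K : Type) [Field K] (c : K)
    (S : FC K ≃+* FC K)
    (hSK : ∀ x : K, S (algebraMap K (FC K) x) = algebraMap K (FC K) x)
    (hSlam : S (lam K) = lam K)
    (hSu1 : ∀ ℓ : ℤ, S (U1 K ℓ) = U1 K (ℓ + 1))
    (hSu2 : ∀ ℓ : ℤ, S (U2 K ℓ) = U2 K (ℓ + 1))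
    (Dt : FC K → FC K)
    (hDadd : ∀ x y, Dt (x + y) = Dt x + Dt y)
    (hDmul : ∀ x y, Dt (x * y) = x * Dt y + Dt x * y)
    (hDK : ∀ x : K, Dt (algebraMap K (FC K) x) = 0)
    (hDlam : Dt (lam K) = 0)
    (hDu1 : ∀ ℓ : ℤ, Dt (U1 K ℓ) = (S ^ ℓ) (Feq1 K))
    (hDu2 : ∀ ℓ : ℤ, Dt (U2 K ℓ) = (S ^ ℓ) (Feq2 K c)) :
    (Mceq K c).det ≠ 0 ∧
    (Mceq K c).map Dt = (Uceq K).map ⇑S * Mceq K c - Mceq K c * Uceq K := by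
  have hSF1 : S (Feq1 K) = U1 K 1 * U2 K 1 / U2 K 2 := by
    simp [Feq1, hSu1, hSu2]
  have hSF2 : S (Feq2 K c) = U2 K 1 * (algebraMap K (FC K) c * U1 K 0 - U1 K 1) / U1 K 0 := by
    simp [Feq2, hSK, hSu1, hSu2]
  refine ⟨by simp [Mceq_det], ?_⟩
  rw [Uceq_map_shift S hSlam hSu1 hSu2]
  exact Mceq_map_derivation c (Derivation.ofLeibniz Dt hDadd hDmul hDK) hDlam
    (by simpa [Feq1] using hDu1 0) (by simpa [hSF1] using hDu1 1)
    (by simpa [Feq2] using hDu2 0) (by simpa [hSF2] using hDu2 1)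

/-- `F` is the field of rational functions over a char-0 field `K` in `λ, u¹_ℓ, u²_ℓ`; `S` is
the field automorphism over `K` fixing `λ` with `S(u^j_ℓ) = u^j_{ℓ+1}`, and `D_t` is the
total derivative of equation (ceqnew) `∂_t u^j = 𝔽^j` with `𝔽¹ = u¹₀u²₀/u²₁`,
`𝔽² = u²₀(cu¹₋₁ − u¹₀)/u¹₋₁` (the unique derivation with `D_t(λ) = 0`,
`D_t(u^j_ℓ) = S^ℓ(𝔽^j)`); both are quantified by these characterizing properties.
Claim: the matrices `Mceq` and `Uceq` form an MLR for (ceqnew):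
`det M ≠ 0` and `D_t(M) = S(U)·M − M·U`. -/
theorem stmt_18 (K : Type) [Field K] [CharZero K] (c : K)
    (S : FC K ≃+* FC K)
    (hSK : ∀ x : K, S (algebraMap K (FC K) x) = algebraMap K (FC K) x)
    (hSlam : S (lam K) = lam K)
    (hSu1 : ∀ ℓ : ℤ, S (U1 K ℓ) = U1 K (ℓ + 1))
    (hSu2 : ∀ ℓ : ℤ, S (U2 K ℓ) = U2 K (ℓ + 1))
    (Dt : FC K → FC K)
    (hDadd : ∀ x y, Dt (x + y) = Dt x + Dt y)
    (hDmul : ∀ x y, Dt (x * y) = x * Dt y + Dt x * y)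
    (hDK : ∀ x : K, Dt (algebraMap K (FC K) x) = 0)
    (hDlam : Dt (lam K) = 0)
    (hDu1 : ∀ ℓ : ℤ, Dt (U1 K ℓ) = (S ^ ℓ) (Feq1 K))
    (hDu2 : ∀ ℓ : ℤ, Dt (U2 K ℓ) = (S ^ ℓ) (Feq2 K c)) :
    (Mceq K c).det ≠ 0 ∧
    (Mceq K c).map Dt = (Uceq K).map ⇑S * Mceq K c - Mceq K c * Uceq K :=
  stmt_18_general K c S hSK hSlam hSu1 hSu2 Dt hDadd hDmul hDK hDlam hDu1 hDu2
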